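/- Let (S_n) be a martingale with respect to a filtration (F_n), S_0 = 0, with increments bounded by 1 in absolute value, and let V_n = Σ_{k=1}^n Var(S_k − S_{k−1} | F_{k−1}) be its predictable quadratic variation. Then for any ε > 0 and v > 0, P(S_n ≥ ε and V_n ≤ v) ≤ exp(−ε²/(2v + 2ε/3)). -/

import Mathlib

open MeasureTheory ProbabilityTheory

lemma exp_tsum' (x : ℝ) : Real.exp x = ∑' n : ℕ, x ^ n / n.factorial := by
  rw [Real.exp_eq_exp_ℝ, NormedSpace.exp_eq_tsum_div]

lemma fact_ge (n : ℕ) : 2 * 3 ^ n ≤ (n + 2).factorial := by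
  induction n with
  | zero => simp [Nat.factorial]
  | succ k ih =>
    calc 2 * 3 ^ (k+1) = 3 * (2 * 3 ^ k) := by ring
    _ ≤ (k + 3) * (k + 2).factorial := Nat.mul_le_mul (by omega) ih
    _ = (k + 3).factorial := rfl

lemma exp_tail (x : ℝ) :
    Real.exp x = 1 + x + ∑' n : ℕ, x ^ (n + 2) / (n + 2).factorial := by
  have hs := Real.summable_pow_div_factorial x
  have h2 := Summable.sum_add_tsum_nat_add 2 hs
  rw [exp_tsum' x, ← h2]
  simp [Finset.sum_range_succ, Nat.factorial]

set_option maxHeartbeats 1000000 in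
lemma exp_le_quad {l x : ℝ} (hl : 0 ≤ l) (hx : |x| ≤ 1) :
    Real.exp (l * x) ≤ 1 + l * x + (Real.exp l - 1 - l) * x ^ 2 := by
  have hsum1 : Summable fun n : ℕ => (l * x) ^ (n + 2) / (n + 2).factorial :=
    (summable_nat_add_iff 2).2 (Real.summable_pow_div_factorial (l * x))
  have hsum2 : Summable fun n : ℕ => l ^ (n + 2) / (n + 2).factorial :=
    (summable_nat_add_iff 2).2 (Real.summable_pow_div_factorial l)
  have key : ∑' n : ℕ, (l * x) ^ (n + 2) / (n + 2).factorial
      ≤ ∑' n : ℕ, x ^ 2 * (l ^ (n + 2) / (n + 2).factorial) := by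
    refine Summable.tsum_le_tsum (fun n => ?_) hsum1 (hsum2.mul_left _)
    rw [mul_pow, ← mul_div_assoc]
    have hfac : (0:ℝ) < ((n + 2).factorial : ℝ) := by
      exact_mod_cast Nat.factorial_pos _
    have hxn : x ^ (n + 2) ≤ x ^ 2 := by
      calc x ^ (n + 2) ≤ |x ^ (n + 2)| := le_abs_self _
      _ = |x| ^ (n + 2) := abs_pow x _
      _ ≤ |x| ^ 2 := pow_le_pow_of_le_one (abs_nonneg x) hx (by omega)
      _ = x ^ 2 := sq_abs x
    have hnum : l ^ (n + 2) * x ^ (n + 2) ≤ x ^ 2 * l ^ (n + 2) := by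
      have hln : 0 ≤ l ^ (n + 2) := by positivity
      nlinarith
    exact by gcongr
  have h2 : ∑' n : ℕ, x ^ 2 * (l ^ (n + 2) / (n + 2).factorial)
      = (Real.exp l - 1 - l) * x ^ 2 := by
    rw [tsum_mul_left]
    have : ∑' n : ℕ, l ^ (n + 2) / (n + 2).factorial = Real.exp l - 1 - l := by
      linarith [exp_tail l]
    rw [this]; ring
  rw [h2] at key
  have h3 := exp_tail (l * x)
  linarith

set_option maxHeartbeats 1000000 in
lemma exp_sub_le {l : ℝ} (hl : 0 ≤ l) (hl3 : l < 3) :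
    Real.exp l - 1 - l ≤ l ^ 2 / (2 * (1 - l / 3)) := by
  have hgeom : ∑' n : ℕ, (l / 3) ^ n = (1 - l / 3)⁻¹ :=
    tsum_geometric_of_lt_one (by positivity) (by linarith)
  have hsumg : Summable fun n : ℕ => (l / 3) ^ n :=
    summable_geometric_of_lt_one (by positivity) (by linarith)
  have hsum2 : Summable fun n : ℕ => l ^ (n + 2) / (n + 2).factorial :=
    (summable_nat_add_iff 2).2 (Real.summable_pow_div_factorial l)
  have key : ∑' n : ℕ, l ^ (n + 2) / (n + 2).factorial
      ≤ ∑' n : ℕ, (l ^ 2 / 2) * (l / 3) ^ n := by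
    refine Summable.tsum_le_tsum (fun n => ?_) hsum2 (hsumg.mul_left _)
    have hfac : (0:ℝ) < (n + 2).factorial := by positivity
    rw [div_le_iff₀ hfac]
    have h1 : (2 : ℝ) * 3 ^ n ≤ (n + 2).factorial := by
      exact_mod_cast Nat.cast_le.2 (fact_ge n)
    have h3 : (0:ℝ) < 3 ^ n := by positivity
    have : (l ^ 2 / 2) * (l / 3) ^ n = l ^ (n + 2) / (2 * 3 ^ n) := by
      rw [div_pow]; field_simp; ring
    rw [this]
    rw [div_mul_eq_mul_div, le_div_iff₀ (by positivity)]
    have hln : 0 ≤ l ^ (n + 2) := by positivity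
    nlinarith
  have hexp := exp_tail l
  rw [tsum_mul_left, hgeom] at key
  have h13 : (0:ℝ) < 1 - l / 3 := by linarith
  have heq : l ^ 2 / (2 * (1 - l / 3)) = l ^ 2 / 2 * (1 - l / 3)⁻¹ := by
    field_simp
  rw [heq]
  linarith

theorem freedman_inequality {Ω : Type*} [m0 : MeasurableSpace Ω]
    (μ : Measure Ω) [IsProbabilityMeasure μ]
    (F : Filtration ℕ m0) (S : ℕ → Ω → ℝ)
    (hS : Martingale S F μ) (hS0 : S 0 = 0)
    (hbdd : ∀ k, ∀ᵐ ω ∂μ, |S (k + 1) ω - S k ω| ≤ 1)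
    (V : ℕ → Ω → ℝ)
    (hV : ∀ n ω, V n ω =
      ∑ k ∈ Finset.range n, (μ[fun ω' => (S (k + 1) ω' - S k ω') ^ 2 | F k]) ω)
    (n : ℕ) (ε v : ℝ) (hε : 0 < ε) (hv : 0 < v) :
    μ {ω | ε ≤ S n ω ∧ V n ω ≤ v}
      ≤ ENNReal.ofReal (Real.exp (-(ε ^ 2 / (2 * v + 2 * ε / 3)))) := by
  classical
  have h3v : (0:ℝ) < 3 * v + ε := by linarith
  set L : ℝ := 3 * ε / (3 * v + ε) with hLdef
  have hL : 0 < L := by positivity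
  have hL3 : L < 3 := by
    rw [hLdef, div_lt_iff₀ h3v]; linarith
  set φ : ℝ := Real.exp L - 1 - L with hφdef
  have hφ : 0 ≤ φ := by
    have := Real.add_one_le_exp L
    rw [hφdef]; linarith
  set Q : ℕ → Ω → ℝ := fun k => μ[fun ω' => (S (k + 1) ω' - S k ω') ^ 2|F k] with hQdef
  set X : ℕ → Ω → ℝ := fun k => S (k + 1) - S k with hXdef
  have hXapp : ∀ k ω, X k ω = S (k + 1) ω - S k ω := fun k ω => rfl
  set Z : ℕ → Ω → ℝ := fun n ω => Real.exp (L * S n ω - φ * V n ω) with hZdef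
  -- basic facts
  have hXint : ∀ k, Integrable (X k) μ := fun k => (hS.integrable (k+1)).sub (hS.integrable k)
  have hXmeas : ∀ k, AEStronglyMeasurable (X k) μ := fun k => (hXint k).aestronglyMeasurable
  have hQnn : ∀ k, 0 ≤ᵐ[μ] Q k := fun k =>
    condExp_nonneg (ae_of_all _ fun ω => sq_nonneg _)
  have hVfun : ∀ m, V m = fun ω => ∑ k ∈ Finset.range m, Q k ω := fun m => funext (hV m)
  have hVmeas : ∀ m k, m ≤ k + 1 → StronglyMeasurable[F k] (V m) := by
    intro m k hmk
    rw [hVfun m]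
    have : (fun ω => ∑ j ∈ Finset.range m, Q j ω) = ∑ j ∈ Finset.range m, Q j := by
      funext ω; simp
    rw [this]
    refine Finset.stronglyMeasurable_sum _ fun j hj => ?_
    have hjk : j ≤ k := by
      have := Finset.mem_range.1 hj; omega
    exact stronglyMeasurable_condExp.mono (F.mono hjk)
  have hVnn : ∀ m, ∀ᵐ ω ∂μ, 0 ≤ V m ω := by
    intro m
    have hall : ∀ᵐ ω ∂μ, ∀ k, 0 ≤ Q k ω := ae_all_iff.2 fun k => hQnn k
    filter_upwards [hall] with ω hω
    rw [hV m ω]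
    exact Finset.sum_nonneg fun k _ => hω k
  have hSbd : ∀ m, ∀ᵐ ω ∂μ, |S m ω| ≤ m := by
    intro m
    induction m with
    | zero =>
      refine ae_of_all _ fun ω => ?_
      rw [hS0]; simp
    | succ k ih =>
      filter_upwards [ih, hbdd k] with ω h1 h2
      push_cast
      calc |S (k+1) ω| = |S k ω + (S (k+1) ω - S k ω)| := by ring_nf
      _ ≤ |S k ω| + |S (k+1) ω - S k ω| := abs_add_le _ _
      _ ≤ k + 1 := by linarith
  have hZmeas : ∀ m, AEStronglyMeasurable (Z m) μ := by
    intro m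
    refine (Real.continuous_exp.comp_stronglyMeasurable ?_).aestronglyMeasurable
    exact (((hS.stronglyAdapted m).mono (F.le m)).const_mul L).sub
      (((hVmeas m m (by omega)).mono (F.le m)).const_mul φ)
  have hZint : ∀ m, Integrable (Z m) μ := by
    intro m
    refine Integrable.mono' (integrable_const (Real.exp (L * m))) (hZmeas m) ?_
    filter_upwards [hSbd m, hVnn m] with ω h1 h2
    rw [Real.norm_eq_abs, abs_of_pos (Real.exp_pos _)]
    apply Real.exp_le_exp.2
    have : S m ω ≤ m := (abs_le.1 h1).2
    nlinarith
  -- conditional mean of increments is zero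
  have hX0 : ∀ k, μ[X k|F k] =ᵐ[μ] 0 := by
    intro k
    have h1 : μ[S (k+1)|F k] =ᵐ[μ] S k := hS.condExp_ae_eq (Nat.le_succ k)
    have h2 : μ[X k|F k] =ᵐ[μ] μ[S (k+1)|F k] - μ[S k|F k] :=
      condExp_sub (hS.integrable (k+1)) (hS.integrable k) (F k)
    have h3 : μ[S k|F k] = S k :=
      condExp_of_stronglyMeasurable (F.le k) (hS.stronglyAdapted k) (hS.integrable k)
    rw [h3] at h2
    filter_upwards [h1, h2] with ω hω1 hω2
    simp only [Pi.sub_apply, Pi.zero_apply] at *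
    rw [hω2, hω1]; ring
  -- integrability of exp(L * X k) and the quadratic bound
  have hXsqint : ∀ k, Integrable (fun ω => (X k ω) ^ 2) μ := by
    intro k
    refine Integrable.mono' (integrable_const 1) ?_ ?_
    · exact ((hXmeas k).mul (hXmeas k)).congr (ae_of_all _ fun ω => (pow_two (X k ω)).symm)
    · filter_upwards [hbdd k] with ω hω
      have h1 : |X k ω| ≤ 1 := hω
      rw [Real.norm_eq_abs, abs_pow]
      calc |X k ω| ^ 2 ≤ 1 ^ 2 := pow_le_pow_left₀ (abs_nonneg _) h1 2
      _ = 1 := one_pow 2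
  have hgint : ∀ k, Integrable (fun ω => Real.exp (L * X k ω)) μ := by
    intro k
    refine Integrable.mono' (integrable_const (Real.exp L)) ?_ ?_
    · exact (Real.continuous_exp.comp_aestronglyMeasurable ((hXmeas k).const_mul L))
    · filter_upwards [hbdd k] with ω hω
      rw [Real.norm_eq_abs, abs_of_pos (Real.exp_pos _)]
      apply Real.exp_le_exp.2
      have : |X k ω| ≤ 1 := by rw [hXapp]; exact hω
      nlinarith [abs_le.1 this]
  -- key conditional bound
  have hcond : ∀ k, μ[fun ω => Real.exp (L * X k ω)|F k]
      ≤ᵐ[μ] fun ω => Real.exp (φ * Q k ω) := by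
    intro k
    set g : Ω → ℝ := fun ω => Real.exp (L * X k ω) with hg
    set h : Ω → ℝ := (fun _ => (1:ℝ)) + (L • X k + φ • fun ω => (X k ω) ^ 2) with hh
    have hh_int2 : Integrable (L • X k + φ • fun ω => (X k ω) ^ 2) μ :=
      ((hXint k).smul L).add ((hXsqint k).smul φ)
    have hh_int : Integrable h μ := (integrable_const 1).add hh_int2
    have hgh : g ≤ᵐ[μ] h := by
      filter_upwards [hbdd k] with ω hω
      have := exp_le_quad hL.le (show |X k ω| ≤ 1 from hω)
      simp only [hh, Pi.add_apply, Pi.smul_apply, smul_eq_mul, hg]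
      rw [hφdef]
      linarith
    have step1 : μ[g|F k] ≤ᵐ[μ] μ[h|F k] := condExp_mono (hgint k) hh_int hgh
    have step2 : μ[h|F k] =ᵐ[μ]
        (fun _ => (1:ℝ)) + (L • μ[X k|F k] + φ • Q k) := by
      have e1 : μ[h|F k] =ᵐ[μ] μ[fun _ => (1:ℝ)|F k] + μ[L • X k + φ • fun ω => (X k ω) ^ 2|F k] :=
        condExp_add (integrable_const 1) hh_int2 (F k)
      have e2 : μ[L • X k + φ • fun ω => (X k ω) ^ 2|F k]
          =ᵐ[μ] μ[L • X k|F k] + μ[φ • fun ω => (X k ω) ^ 2|F k] :=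
        condExp_add ((hXint k).smul L) ((hXsqint k).smul φ) (F k)
      have e3 : μ[L • X k|F k] =ᵐ[μ] L • μ[X k|F k] := condExp_smul L (X k) (F k)
      have e4 : μ[φ • fun ω => (X k ω) ^ 2|F k] =ᵐ[μ] φ • Q k := by
        refine (condExp_smul φ _ _).trans ?_
        have heqq : μ[fun ω => (X k ω) ^ 2|F k] = Q k := rfl
        rw [heqq]
      have e5 : μ[fun _ => (1:ℝ)|F k] = fun _ => (1:ℝ) := condExp_const (F.le k) 1
      filter_upwards [e1, e2, e3, e4] with ω h1 h2 h3 h4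
      simp only [Pi.add_apply] at *
      rw [h1, e5, h2, h3, h4]
    have step3 : (fun _ => (1:ℝ)) + (L • μ[X k|F k] + φ • Q k)
        ≤ᵐ[μ] fun ω => Real.exp (φ * Q k ω) := by
      filter_upwards [hX0 k] with ω h0
      simp only [Pi.add_apply, Pi.smul_apply, smul_eq_mul, h0, Pi.zero_apply, mul_zero]
      have := Real.add_one_le_exp (φ * Q k ω)
      linarith
    exact step1.trans (step2.le.trans step3)
  -- main induction: the exponential supermartingale has mean ≤ 1
  have hmain : ∀ m, ∫ ω, Z m ω ∂μ ≤ 1 := by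
    intro m
    induction m with
    | zero =>
      have hZ0 : Z 0 = fun _ => (1:ℝ) := by
        funext ω
        rw [hZdef]
        simp only
        rw [congrFun hS0 ω, hV 0 ω]
        simp
      rw [hZ0]
      simp
    | succ k ih =>
      set f : Ω → ℝ := fun ω => Real.exp (L * S k ω - φ * V (k+1) ω) with hf
      set g : Ω → ℝ := fun ω => Real.exp (L * X k ω) with hg
      have hdecomp : Z (k+1) = f * g := by
        funext ω
        rw [hZdef]
        simp only [Pi.mul_apply, hf, hg]
        rw [← Real.exp_add]
        congr 1
        rw [hXapp]
        ring
      have hf_meas : StronglyMeasurable[F k] f :=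
        Real.continuous_exp.comp_stronglyMeasurable
          (((hS.stronglyAdapted k).const_mul L).sub ((hVmeas (k+1) k (by omega)).const_mul φ))
      have hfg_int : Integrable (f * g) μ := hdecomp ▸ hZint (k+1)
      have key := condExp_mul_of_stronglyMeasurable_left hf_meas hfg_int (hgint k)
      have hVsplit : ∀ ω, V (k+1) ω = V k ω + Q k ω := by
        intro ω
        rw [hV (k+1) ω, hV k ω, Finset.sum_range_succ]
      have hae : μ[Z (k+1)|F k] ≤ᵐ[μ] Z k := by
        rw [hdecomp]
        filter_upwards [key, hcond k] with ω h1 h2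
        rw [h1]
        simp only [Pi.mul_apply]
        calc f ω * (μ[g|F k]) ω ≤ f ω * Real.exp (φ * Q k ω) := by
              apply mul_le_mul_of_nonneg_left h2 (Real.exp_pos _).le
        _ = Z k ω := by
            rw [hf, hZdef]
            simp only
            rw [← Real.exp_add, hVsplit ω]
            congr 1
            ring
      calc ∫ ω, Z (k+1) ω ∂μ = ∫ ω, (μ[Z (k+1)|F k]) ω ∂μ :=
            (integral_condExp (F.le k)).symm
      _ ≤ ∫ ω, Z k ω ∂μ := integral_mono_ae integrable_condExp (hZint k) hae
      _ ≤ 1 := ih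
  -- Markov / Chernoff step
  set c : ℝ := Real.exp (L * ε - φ * v) with hc
  have hcpos : 0 < c := Real.exp_pos _
  have hsub : {ω | ε ≤ S n ω ∧ V n ω ≤ v} ⊆ {ω | c ≤ Z n ω} := by
    intro ω hω
    obtain ⟨h1, h2⟩ := hω
    simp only [Set.mem_setOf_eq, hZdef, hc]
    apply Real.exp_le_exp.2
    nlinarith
  have hmarkov := mul_meas_ge_le_integral_of_nonneg
    (ae_of_all μ fun ω => (Real.exp_pos (L * S n ω - φ * V n ω)).le) (hZint n) c
  have hms : (μ {ω | ε ≤ S n ω ∧ V n ω ≤ v}).toReal ≤ (μ {ω | c ≤ Z n ω}).toReal :=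
    ENNReal.toReal_mono (measure_ne_top μ _) (measure_mono hsub)
  have hfin : (μ {ω | ε ≤ S n ω ∧ V n ω ≤ v}).toReal ≤ 1 / c := by
    rw [le_div_iff₀ hcpos]
    calc (μ {ω | ε ≤ S n ω ∧ V n ω ≤ v}).toReal * c
        ≤ (μ {ω | c ≤ Z n ω}).toReal * c := by nlinarith
    _ = c * (μ {ω | c ≤ Z n ω}).toReal := mul_comm _ _
    _ ≤ ∫ ω, Z n ω ∂μ := hmarkov
    _ ≤ 1 := hmain n
  -- arithmetic: L * ε - φ * v ≥ ε^2/(2v + 2ε/3)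
  have harith : ε ^ 2 / (2 * v + 2 * ε / 3) ≤ L * ε - φ * v := by
    have hφle : φ ≤ L ^ 2 / (2 * (1 - L / 3)) := by
      rw [hφdef]; exact exp_sub_le hL.le hL3
    have hden : (0:ℝ) < 1 - L / 3 := by linarith
    have key2 : L * ε - L ^ 2 / (2 * (1 - L / 3)) * v = ε ^ 2 / (2 * v + 2 * ε / 3) := by
      rw [hLdef]
      have h1 : (3 * v + ε) ≠ 0 := h3v.ne'
      have h2 : (2 * v + 2 * ε / 3) ≠ 0 := by positivity
      have h4 : (ε * v ^ 2 * 108 + ε ^ 2 * v * 18 + v ^ 3 * 162) ≠ 0 := by positivity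
      field_simp
      ring_nf
    nlinarith [mul_le_mul_of_nonneg_right hφle hv.le]
  -- conclude
  have h1c : 1 / c = Real.exp (-(L * ε - φ * v)) := by
    rw [hc, Real.exp_neg, one_div]
  calc μ {ω | ε ≤ S n ω ∧ V n ω ≤ v}
      = ENNReal.ofReal (μ {ω | ε ≤ S n ω ∧ V n ω ≤ v}).toReal :=
        (ENNReal.ofReal_toReal (measure_ne_top μ _)).symm
  _ ≤ ENNReal.ofReal (1 / c) := ENNReal.ofReal_le_ofReal hfin
  _ = ENNReal.ofReal (Real.exp (-(L * ε - φ * v))) := by rw [h1c]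
  _ ≤ ENNReal.ofReal (Real.exp (-(ε ^ 2 / (2 * v + 2 * ε / 3)))) := by
      apply ENNReal.ofReal_le_ofReal
      apply Real.exp_le_exp.2
      linarith
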